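/- arXiv:1907.01035 — 4 statements merged into one kernel-verified Lean document; each statement's English description precedes it below -/
import Mathlib

section
/- Let X₁ have double-truncated Rayleigh density p₁(x) = (x/σ₁²)e^{−x²/(2σ₁²)}/α on [m₁, m₂] with α = e^{−β₁} − e^{−β₂}, β₁ = m₁²/(2σ₁²), β₂ = m₂²/(2σ₁²), and let X₂ be an independent Rayleigh random variable with density p₂(x) = (x/σ₂²)e^{−x²/(2σ₂²)} on (0,∞). Then the product X = X₁X₂ has density p_X(x) = x·[Γ(0, β₁; x²/(4σ²)) − Γ(0, β₂; x²/(4σ²))]/(α·2σ²) for x ≥ 0, where σ = σ₁σ₂ and Γ(a, y; b) = ∫_y^∞ t^{a−1} e^{−t − b/t} dt is the generalized incomplete gamma function. -/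
open MeasureTheory Real

/-- Generalized incomplete gamma function `Γ(a, y; b) = ∫_y^∞ t^{a−1} e^{−t − b/t} dt`. -/
noncomputable def genGamma (a y b : ℝ) : ℝ :=
  ∫ t in Set.Ioi y, t ^ (a - 1) * Real.exp (-t - b / t)

set_option maxHeartbeats 1000000

lemma genGamma_integrable (b : ℝ) (hb : 0 < b) (y : ℝ) (hy : 0 ≤ y) :
    IntegrableOn (fun t : ℝ => t ^ ((0:ℝ)-1) * Real.exp (-t - b / t)) (Set.Ioi y) := by
  have hmeas : Measurable (fun t : ℝ => t ^ ((0:ℝ)-1) * Real.exp (-t - b / t)) :=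
    (measurable_id.pow_const _).mul
      ((measurable_id.neg.sub (measurable_const.div measurable_id)).exp)
  have hg : IntegrableOn (fun t : ℝ => b⁻¹ * Real.exp (-t)) (Set.Ioi y) := by
    have he : IntegrableOn (fun t : ℝ => Real.exp (-t)) (Set.Ioi y) := by
      simpa using exp_neg_integrableOn_Ioi y one_pos
    exact he.const_mul _
  apply Integrable.mono hg hmeas.aestronglyMeasurable.restrict
  rw [ae_restrict_iff' measurableSet_Ioi]
  refine ae_of_all _ fun t ht => ?_
  have ht0 : 0 < t := lt_of_le_of_lt hy ht
  rw [Real.norm_eq_abs, Real.norm_eq_abs]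
  have h1 : t ^ ((0:ℝ)-1) = t⁻¹ := by
    rw [zero_sub, Real.rpow_neg_one]
  rw [h1, abs_of_nonneg (by positivity), abs_of_nonneg (by positivity)]
  have key : t⁻¹ * Real.exp (-(b/t)) ≤ b⁻¹ := by
    rw [Real.exp_neg]
    rw [inv_eq_one_div b, le_div_iff₀ hb]
    calc t⁻¹ * (Real.exp (b/t))⁻¹ * b = (b/t) * (Real.exp (b/t))⁻¹ := by ring
      _ ≤ Real.exp (b/t) * (Real.exp (b/t))⁻¹ := by
          apply mul_le_mul_of_nonneg_right _ (by positivity)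
          exact le_trans (by linarith) (Real.add_one_le_exp _)
      _ = 1 := mul_inv_cancel₀ (Real.exp_pos _).ne'
  calc t ⁻¹ * Real.exp (-t - b/t) = (t⁻¹ * Real.exp (-(b/t))) * Real.exp (-t) := by
        rw [show (-t - b/t) = -(b/t) + -t by ring, Real.exp_add]; ring
    _ ≤ b⁻¹ * Real.exp (-t) := mul_le_mul_of_nonneg_right key (Real.exp_pos _).le

lemma genGamma_sub (b : ℝ) (hb : 0 < b) {y y' : ℝ} (hy : 0 ≤ y) (hyy : y ≤ y') :
    genGamma 0 y b - genGamma 0 y' b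
      = ∫ t in Set.Ioc y y', t ^ ((0:ℝ)-1) * Real.exp (-t - b/t) := by
  have h1 := genGamma_integrable b hb y hy
  have h2 := genGamma_integrable b hb y' (hy.trans hyy)
  have hsplit : Set.Ioc y y' ∪ Set.Ioi y' = Set.Ioi y := Set.Ioc_union_Ioi_eq_Ioi hyy
  unfold genGamma
  rw [show Set.Ioi y = Set.Ioc y y' ∪ Set.Ioi y' from hsplit.symm,
    setIntegral_union (Set.Ioc_disjoint_Ioi le_rfl) measurableSet_Ioi
      (h1.mono_set (by rw [← hsplit]; exact Set.subset_union_left)) h2]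
  ring

lemma sq_image (c : ℝ) (hc : 0 < c) {a b : ℝ} (ha : 0 ≤ a) (hab : a ≤ b) :
    (fun u : ℝ => u^2/(2*c)) '' Set.Ioc a b = Set.Ioc (a^2/(2*c)) (b^2/(2*c)) := by
  have h2c : 0 < 2*c := by linarith
  ext t
  constructor
  · rintro ⟨u, ⟨hau, hub⟩, rfl⟩
    have hu0 : 0 < u := lt_of_le_of_lt ha hau
    constructor
    · apply div_lt_div_of_pos_right _ h2c
      exact pow_lt_pow_left₀ hau ha two_ne_zero
    · exact (div_le_div_iff_of_pos_right h2c).mpr (pow_le_pow_left₀ hu0.le hub 2)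
  · rintro ⟨h1, h2⟩
    have ht0 : 0 ≤ t := le_trans (by positivity) h1.le
    refine ⟨Real.sqrt (2*c*t), ⟨?_, ?_⟩, ?_⟩
    · rw [show a = Real.sqrt (a^2) from (Real.sqrt_sq ha).symm]
      apply Real.sqrt_lt_sqrt (by positivity)
      rw [div_lt_iff₀ h2c] at h1; linarith
    · rw [show b = Real.sqrt (b^2) from (Real.sqrt_sq (ha.trans hab)).symm]
      apply Real.sqrt_le_sqrt
      rw [le_div_iff₀ h2c] at h2; linarith
    · show Real.sqrt (2*c*t) ^ 2 / (2*c) = t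
      rw [Real.sq_sqrt (by positivity), mul_comm, mul_div_assoc,
        div_self h2c.ne', mul_one]


/-- Product of a double-truncated Rayleigh r.v. (on `[m₁, m₂]`) and an independent Rayleigh
r.v.: the Mellin-convolution density of `X = X₁X₂` equals
`x·[Γ(0, β₁; x²/(4σ²)) − Γ(0, β₂; x²/(4σ²))]/(α·2σ²)`, where `σ = σ₁σ₂`,
`β_j = m_j²/(2σ₁²)` and `α = e^{−β₁} − e^{−β₂}`. -/
theorem product_truncRayleigh_rayleigh_density (σ₁ σ₂ m₁ m₂ : ℝ)
    (hσ₁ : 0 < σ₁) (hσ₂ : 0 < σ₂) (hm₁ : 0 ≤ m₁) (hm : m₁ < m₂) :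
    ∀ x : ℝ, 0 ≤ x →
      ∫ x₁ in Set.Icc m₁ m₂,
          ((x₁ / σ₁ ^ 2) * Real.exp (-x₁ ^ 2 / (2 * σ₁ ^ 2)) /
              (Real.exp (-(m₁ ^ 2 / (2 * σ₁ ^ 2))) -
                Real.exp (-(m₂ ^ 2 / (2 * σ₁ ^ 2))))) *
            (((x / x₁) / σ₂ ^ 2) * Real.exp (-(x / x₁) ^ 2 / (2 * σ₂ ^ 2))) *
            (1 / x₁) =
        x * (genGamma 0 (m₁ ^ 2 / (2 * σ₁ ^ 2)) (x ^ 2 / (4 * (σ₁ * σ₂) ^ 2)) -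
              genGamma 0 (m₂ ^ 2 / (2 * σ₁ ^ 2)) (x ^ 2 / (4 * (σ₁ * σ₂) ^ 2))) /
          ((Real.exp (-(m₁ ^ 2 / (2 * σ₁ ^ 2))) -
              Real.exp (-(m₂ ^ 2 / (2 * σ₁ ^ 2)))) * (2 * (σ₁ * σ₂) ^ 2)) := by
  intro x hx
  rcases eq_or_lt_of_le hx with h0 | hx0
  · rw [← h0]
    simp
  · -- notation
    set b : ℝ := x ^ 2 / (4 * (σ₁ * σ₂) ^ 2) with hbdef
    have hb : 0 < b := by positivity
    have hσ1sq : 0 < σ₁ ^ 2 := by positivity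
    have hβ₁ : 0 ≤ m₁ ^ 2 / (2 * σ₁ ^ 2) := by positivity
    have hm₂pos : 0 < m₂ := lt_of_le_of_lt hm₁ hm
    have hββ : m₁ ^ 2 / (2 * σ₁ ^ 2) ≤ m₂ ^ 2 / (2 * σ₁ ^ 2) := by
      apply div_le_div_of_nonneg_right (pow_le_pow_left₀ hm₁ hm.le 2) ?_
      positivity
    have hββ' : m₁ ^ 2 / (2 * σ₁ ^ 2) < m₂ ^ 2 / (2 * σ₁ ^ 2) := by
      apply div_lt_div_of_pos_right (pow_lt_pow_left₀ hm hm₁ two_ne_zero) (by positivity)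
    have hα : 0 < Real.exp (-(m₁ ^ 2 / (2 * σ₁ ^ 2))) - Real.exp (-(m₂ ^ 2 / (2 * σ₁ ^ 2))) :=
      sub_pos.2 (Real.exp_lt_exp.2 (neg_lt_neg hββ'))
    -- substitution
    have hderiv : ∀ u ∈ Set.Ioc m₁ m₂,
        HasDerivWithinAt (fun u : ℝ => u ^ 2 / (2 * σ₁ ^ 2)) (u / σ₁ ^ 2) (Set.Ioc m₁ m₂) u := by
      intro u _
      have h := ((hasDerivAt_pow 2 u).div_const (2 * σ₁ ^ 2)).hasDerivWithinAt
        (s := Set.Ioc m₁ m₂)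
      refine h.congr_deriv ?_
      push_cast
      rw [pow_one]
      field_simp
    have hinj : Set.InjOn (fun u : ℝ => u ^ 2 / (2 * σ₁ ^ 2)) (Set.Ioc m₁ m₂) := by
      intro u hu v hv h
      have hu0 : 0 < u := lt_of_le_of_lt hm₁ hu.1
      have hv0 : 0 < v := lt_of_le_of_lt hm₁ hv.1
      field_simp at h
      exact (pow_left_inj₀ hu0.le hv0.le two_ne_zero).mp h
    have key : (∫ t in Set.Ioc (m₁ ^ 2 / (2 * σ₁ ^ 2)) (m₂ ^ 2 / (2 * σ₁ ^ 2)),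
          t ^ ((0:ℝ)-1) * Real.exp (-t - b / t))
        = ∫ u in Set.Ioc m₁ m₂, |u / σ₁ ^ 2| •
            ((u ^ 2 / (2 * σ₁ ^ 2)) ^ ((0:ℝ)-1) *
              Real.exp (-(u ^ 2 / (2 * σ₁ ^ 2)) - b / (u ^ 2 / (2 * σ₁ ^ 2)))) := by
      rw [← sq_image (σ₁ ^ 2) hσ1sq hm₁ hm.le]
      exact integral_image_eq_integral_abs_deriv_smul measurableSet_Ioc hderiv hinj _
    rw [genGamma_sub b hb hβ₁ hββ, key, MeasureTheory.integral_Icc_eq_integral_Ioc]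
    rw [show (x * (∫ u in Set.Ioc m₁ m₂, |u / σ₁ ^ 2| •
            ((u ^ 2 / (2 * σ₁ ^ 2)) ^ ((0:ℝ)-1) *
              Real.exp (-(u ^ 2 / (2 * σ₁ ^ 2)) - b / (u ^ 2 / (2 * σ₁ ^ 2))))) /
          ((Real.exp (-(m₁ ^ 2 / (2 * σ₁ ^ 2))) -
              Real.exp (-(m₂ ^ 2 / (2 * σ₁ ^ 2)))) * (2 * (σ₁ * σ₂) ^ 2)))
        = ∫ u in Set.Ioc m₁ m₂,
            (x / ((Real.exp (-(m₁ ^ 2 / (2 * σ₁ ^ 2))) -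
              Real.exp (-(m₂ ^ 2 / (2 * σ₁ ^ 2)))) * (2 * (σ₁ * σ₂) ^ 2))) *
            (|u / σ₁ ^ 2| •
            ((u ^ 2 / (2 * σ₁ ^ 2)) ^ ((0:ℝ)-1) *
              Real.exp (-(u ^ 2 / (2 * σ₁ ^ 2)) - b / (u ^ 2 / (2 * σ₁ ^ 2))))) from by
      rw [integral_const_mul]; ring]
    apply setIntegral_congr_fun measurableSet_Ioc
    intro u hu
    have hu0 : 0 < u := lt_of_le_of_lt hm₁ hu.1
    have husq : (0:ℝ) < u ^ 2 / (2 * σ₁ ^ 2) := by positivity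
    simp only [smul_eq_mul]
    rw [abs_of_pos (show (0:ℝ) < u / σ₁ ^ 2 by positivity)]
    rw [show ((0:ℝ) - 1) = -1 by ring, Real.rpow_neg_one]
    rw [show -(u ^ 2 / (2 * σ₁ ^ 2)) - b / (u ^ 2 / (2 * σ₁ ^ 2))
        = -u ^ 2 / (2 * σ₁ ^ 2) + -(x / u) ^ 2 / (2 * σ₂ ^ 2) from by
      rw [hbdef]; field_simp; ring]
    rw [Real.exp_add, inv_div]
    set A := rexp (-(m₁ ^ 2 / (2 * σ₁ ^ 2))) - rexp (-(m₂ ^ 2 / (2 * σ₁ ^ 2))) with hA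
    set E₁ := rexp (-u ^ 2 / (2 * σ₁ ^ 2)) with hE₁
    set E₂ := rexp (-(x / u) ^ 2 / (2 * σ₂ ^ 2)) with hE₂
    field_simp [hα.ne']
end

section
/- Let X₁, X₂ be independent Rayleigh random variables with densities (x/σᵢ²)e^{−x²/(2σᵢ²)} on (0,∞), i = 1,2. Then X = X₁X₂ has density p_X(x) = (x/σ²)·K₀(x/σ) for x ≥ 0, where σ = σ₁σ₂ and K₀ is the modified Bessel function of the second kind of order zero. -/
open MeasureTheory Real

/-- Modified Bessel function of the second kind of order zero,
`K₀(z) = ∫_0^∞ e^{−z cosh t} dt`. -/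
noncomputable def besselK0 (z : ℝ) : ℝ := ∫ t in Set.Ioi (0 : ℝ), Real.exp (-z * Real.cosh t)

/-!
With `a = 1 / (2σ₁²)` and `b = x² / (2σ₂²)` the integrand is `(x / σ²) · u⁻¹ exp (-(a u² + b / u²))`.
The substitution `u = c eˢ` with `a c² = b / c² = √(ab)` carries the invariant measure `du / u`
to `ds` and the exponent to `-2√(ab) cosh 2s`, so the integral is the cosh-representation of
`K₀(2√(ab)) = K₀(x / σ)`.
-/

theorem integral_Ioi_inv_mul_eq_integral_comp_mul_exp {c : ℝ} (hc : 0 < c) (f : ℝ → ℝ) :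
    ∫ u in Set.Ioi 0, u⁻¹ * f u = ∫ s, f (c * exp s) := by
  have hrange : (fun s ↦ c * exp s) '' Set.univ = Set.Ioi 0 := by
    rw [Set.image_univ, ← Set.image_univ, ← Set.image_image (c * ·) exp, Set.image_univ, range_exp,
      Set.image_const_mul_Ioi_zero hc]
  have hderiv : ∀ s ∈ Set.univ, HasDerivWithinAt (fun s ↦ c * exp s) (c * exp s) Set.univ s :=
    fun s _ ↦ ((hasDerivAt_exp s).const_mul c).hasDerivWithinAt
  have hinj : Set.InjOn (fun s ↦ c * exp s) Set.univ :=
    fun s _ t _ h ↦ exp_injective (mul_left_cancel₀ hc.ne' h)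
  rw [← hrange, integral_image_eq_integral_abs_deriv_smul MeasurableSet.univ hderiv hinj,
    Measure.restrict_univ]
  congr 1 with s
  rw [smul_eq_mul, abs_of_pos (by positivity), ← mul_assoc, mul_inv_cancel₀ (by positivity), one_mul]

theorem integral_exp_neg_mul_cosh_two_mul (z : ℝ) :
    ∫ s, exp (-z * cosh (2 * s)) = besselK0 z := by
  have hsym : ∫ t, exp (-z * cosh t) = 2 * besselK0 z := by
    rw [besselK0]
    simpa only [cosh_abs] using integral_comp_abs (f := fun t ↦ exp (-z * cosh t))
  rw [Measure.integral_comp_mul_left (fun t ↦ exp (-z * cosh t)), hsym, smul_eq_mul]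
  norm_num
  ring

theorem integral_Ioi_inv_mul_exp_neg_mul_sq_add_div_sq {a b : ℝ} (ha : 0 < a) (hb : 0 < b) :
    ∫ u in Set.Ioi 0, u⁻¹ * exp (-(a * u ^ 2 + b / u ^ 2)) = besselK0 (2 * √(a * b)) := by
  set c := √√(b / a)
  have hc : 0 < c := by positivity
  have hc4 : c ^ 2 * c ^ 2 = b / a := by
    rw [sq_sqrt (by positivity), mul_self_sqrt (by positivity)]
  have hr : √(a * b) = a * c ^ 2 := by
    rw [sqrt_eq_iff_mul_self_eq (by positivity) (by positivity), mul_mul_mul_comm, hc4]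
    field_simp
  rw [integral_Ioi_inv_mul_eq_integral_comp_mul_exp hc, hr, ← integral_exp_neg_mul_cosh_two_mul]
  have hb' : b = a * c ^ 2 * c ^ 2 := by rw [mul_assoc, hc4]; field_simp
  congr 1 with s
  have hexp : exp (2 * s) = exp s ^ 2 := by rw [← exp_nat_mul]; norm_num
  congr 1
  rw [cosh_eq, exp_neg (2 * s), hexp, hb']
  field_simp

/-- Product of two independent Rayleigh r.v.s: the Mellin-convolution density of
`X = X₁X₂` equals `(x/σ²)·K₀(x/σ)` where `σ = σ₁σ₂` (double-Rayleigh distribution). -/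
theorem product_rayleigh_rayleigh_density (σ₁ σ₂ : ℝ) (hσ₁ : 0 < σ₁) (hσ₂ : 0 < σ₂) :
    ∀ x : ℝ, 0 ≤ x →
      ∫ x₁ in Set.Ioi (0 : ℝ),
          ((x₁ / σ₁ ^ 2) * Real.exp (-x₁ ^ 2 / (2 * σ₁ ^ 2))) *
            (((x / x₁) / σ₂ ^ 2) * Real.exp (-(x / x₁) ^ 2 / (2 * σ₂ ^ 2))) *
            (1 / x₁) =
        (x / (σ₁ * σ₂) ^ 2) * besselK0 (x / (σ₁ * σ₂)) := by
  intro x hx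
  rcases hx.eq_or_lt with rfl | hx
  · simp
  have hK : x / (σ₁ * σ₂) = 2 * √((2 * σ₁ ^ 2)⁻¹ * (x ^ 2 / (2 * σ₂ ^ 2))) := by
    rw [show (2 * σ₁ ^ 2)⁻¹ * (x ^ 2 / (2 * σ₂ ^ 2)) = (x / (2 * (σ₁ * σ₂))) ^ 2 by field_simp,
      sqrt_sq (by positivity)]
    field_simp
  rw [hK, ← integral_Ioi_inv_mul_exp_neg_mul_sq_add_div_sq (by positivity) (by positivity),
    ← integral_const_mul]
  refine setIntegral_congr_fun measurableSet_Ioi fun x₁ (hx₁ : 0 < x₁) ↦ ?_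
  rw [mul_mul_mul_comm, ← exp_add]
  field_simp
  ring_nf
end

section
/- For b > 0 and y > 0, the generalized incomplete gamma function satisfies Γ(0, y; b) = ∫_y^∞ t^{−1}e^{−t − b/t} dt = ∑_{n=0}^∞ ((−b/y)^n/n!)·y⁰·E_{n+1}(y) when y ≥ √b, where E_n(y) = ∫_1^∞ t^{−n}e^{−yt} dt is the generalized exponential integral. -/
/-!
Substituting `t = y u` turns `Γ(0, y; b)` into `∫_1^∞ u⁻¹ e^{-y u} e^{-(b/y)/u} du`. On `u > 1`
the exponent `-(b/y)/u` is bounded by `|b/y|`, so expanding `e^{-(b/y)/u}` in its power series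
and integrating term by term is justified because the integrals of the absolute values of the
terms are dominated by `|b/y|ⁿ/n! · ∫_1^∞ u⁻¹ e^{-y u} du`; the `n`-th term is `(-b/y)ⁿ/n! · E_{n+1}(y)`.
-/

open MeasureTheory Real

/-- Generalized exponential integral `E_n(y) = ∫_1^∞ t^{−n} e^{−yt} dt`. -/
noncomputable def expInt (n : ℕ) (y : ℝ) : ℝ :=
  ∫ t in Set.Ioi (1 : ℝ), t ^ (-(n : ℝ)) * Real.exp (-y * t)

theorem hasSum_integral_mul_exp {α : Type*} [MeasurableSpace α] {μ : Measure α} {f g : α → ℝ}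
    {C : ℝ} (hg : Integrable g μ) (hf : AEStronglyMeasurable f μ) (hfC : ∀ᵐ x ∂μ, |f x| ≤ C) :
    HasSum (fun n : ℕ => ∫ x, g x * (f x ^ n / n.factorial) ∂μ) (∫ x, g x * exp (f x) ∂μ) := by
  have hbound (n : ℕ) :
      ∀ᵐ x ∂μ, ‖g x * (f x ^ n / n.factorial)‖ ≤ ‖g x‖ * (C ^ n / n.factorial) := by
    filter_upwards [hfC] with x hx
    rw [norm_mul, norm_div, norm_pow, Real.norm_natCast, Real.norm_eq_abs (f x)]
    gcongr
  have hint (n : ℕ) : Integrable (fun x => g x * (f x ^ n / n.factorial)) μ :=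
    (hg.norm.mul_const _).mono' (by fun_prop) (hbound n)
  have hsum : Summable fun n : ℕ => ∫ x, ‖g x * (f x ^ n / n.factorial)‖ ∂μ := by
    refine Summable.of_nonneg_of_le (fun n => integral_nonneg fun x => norm_nonneg _)
      (fun n => ?_) ((Real.summable_pow_div_factorial C).mul_left (∫ x, ‖g x‖ ∂μ))
    rw [← integral_mul_const]
    exact integral_mono_ae (hint n).norm (hg.norm.mul_const _) (hbound n)
  have hexp (x : α) : ∑' n : ℕ, g x * (f x ^ n / n.factorial) = g x * exp (f x) := by
    rw [tsum_mul_left, exp_eq_exp_ℝ, (NormedSpace.expSeries_div_hasSum_exp (f x)).tsum_eq]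
  simpa only [hexp] using hasSum_integral_of_summable_integral_norm hint hsum

theorem genGamma_zero_eq_integral_Ioi_one {y : ℝ} (hy : 0 < y) (b : ℝ) :
    genGamma 0 y b = ∫ u in Set.Ioi 1, u⁻¹ * exp (-y * u) * exp (-b / y / u) := by
  have hsub := integral_comp_mul_left_Ioi (fun t => t ^ ((0 : ℝ) - 1) * exp (-t - b / t)) 1 hy
  rw [mul_one, smul_eq_mul, ← genGamma, eq_inv_mul_iff_mul_eq₀ hy.ne', ← integral_const_mul] at hsub
  rw [← hsub]
  refine setIntegral_congr_fun measurableSet_Ioi fun u (hu : 1 < u) => ?_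
  have hu0 : u ≠ 0 := (zero_lt_one.trans hu).ne'
  have hexponent : -(y * u) - b / (y * u) = -y * u + -b / y / u := by
    field_simp
    ring
  rw [zero_sub, rpow_neg_one, hexponent, exp_add]
  field_simp

theorem integrableOn_inv_mul_exp_neg_mul_Ioi_one {y : ℝ} (hy : 0 < y) :
    IntegrableOn (fun u => u⁻¹ * exp (-y * u)) (Set.Ioi 1) := by
  refine (exp_neg_integrableOn_Ioi 1 hy).mono' ?_ ?_
  · exact ((continuousOn_inv₀.mono fun u (hu : 1 < u) => (zero_lt_one.trans hu).ne').mul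
      (by fun_prop)).aestronglyMeasurable measurableSet_Ioi
  · filter_upwards [ae_restrict_mem measurableSet_Ioi] with u (hu : 1 < u)
    rw [norm_mul, norm_inv, Real.norm_of_nonneg (by linarith), Real.norm_of_nonneg (by positivity)]
    exact mul_le_of_le_one_left (by positivity) (inv_le_one_of_one_le₀ hu.le)

theorem genGamma_series_general (b y : ℝ) (hy : 0 < y) :
    genGamma 0 y b =
      ∑' n : ℕ, ((-b / y) ^ n / (n.factorial : ℝ)) * y ^ (0 : ℝ) * expInt (n + 1) y := by
  have hbound : ∀ᵐ u ∂(volume.restrict (Set.Ioi (1 : ℝ))), |-b / y / u| ≤ |-b / y| := by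
    filter_upwards [ae_restrict_mem measurableSet_Ioi] with u (hu : 1 < u)
    rw [abs_div, abs_of_pos (by linarith : (0:ℝ) < u)]
    exact div_le_self (abs_nonneg _) hu.le
  have hsum := hasSum_integral_mul_exp (integrableOn_inv_mul_exp_neg_mul_Ioi_one hy)
    (by fun_prop) hbound
  rw [genGamma_zero_eq_integral_Ioi_one hy, ← hsum.tsum_eq]
  refine tsum_congr fun n => ?_
  rw [rpow_zero, mul_one, expInt, ← integral_const_mul]
  refine setIntegral_congr_fun measurableSet_Ioi fun u (hu : 1 < u) => ?_
  have hu0 : 0 < u := zero_lt_one.trans hu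
  rw [rpow_neg hu0.le, rpow_natCast, div_pow _ u, pow_succ]
  field_simp

/-- Series expansion of `Γ(0, y; b)` in terms of generalized exponential integrals, valid
for `y ≥ √b`: `Γ(0, y; b) = ∑_{n=0}^∞ ((−b/y)^n/n!)·y⁰·E_{n+1}(y)`. -/
theorem genGamma_series (b y : ℝ) (hb : 0 < b) (hy : 0 < y) (h : Real.sqrt b ≤ y) :
    genGamma 0 y b =
      ∑' n : ℕ, ((-b / y) ^ n / (n.factorial : ℝ)) * y ^ (0 : ℝ) * expInt (n + 1) y :=
  genGamma_series_general b y hy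
end

section
/- Let X₁ have double-truncated Rayleigh density on [m₁, m₂] as above, and X₂ be independent Rician with density p₂(x) = (x/σ₂²)e^{−(x²+μ²)/(2σ₂²)} I₀(xμ/σ₂²) on (0,∞). Then X = X₁X₂ has density p_X(x) = (x e^{−μ²/(2σ₂²)}/(2σ²)) ∑_{i=0}^∞ [Γ(−i, β₁; x²/(4σ²)) − Γ(−i, β₂; x²/(4σ²))] / (α · i! · i! · (2σ₂²σ²)^i) · (xμ/2)^{2i} for x ≥ 0, where σ = σ₁σ₂, β_j = m_j²/(2σ₁²), α = e^{−β₁} − e^{−β₂}, and I₀ is the modified Bessel function of the first kind of order 0. -/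
open MeasureTheory Real

/-- Modified Bessel function of the first kind of order zero,
`I₀(h) = ∑_{k=0}^∞ (h²/4)^k/(k!·k!)`. -/
noncomputable def besselI0 (h : ℝ) : ℝ :=
  ∑' k : ℕ, (h ^ 2 / 4) ^ k / ((k.factorial : ℝ) * (k.factorial : ℝ))

/-!
Expanding `I₀` into its power series writes the integrand as a series of nonnegative terms,
so integral and sum may be interchanged. After the substitution `t = x₁²/(2σ₁²)`, the `i`-th
term becomes a constant multiple of `t^(-i-1) e^{-t - b/t}` with `b = x²/(4σ²)`, integrated
over `(β₁, β₂]`, which is `Γ(-i, β₁; b) - Γ(-i, β₂; b)`.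
-/

open Set

theorem integral_tsum_of_nonneg {α ι : Type*} [MeasurableSpace α] [Countable ι]
    {μ : Measure α} {f : ι → α → ℝ} (hf_nonneg : ∀ i, 0 ≤ᵐ[μ] f i)
    (hf_int : ∀ i, Integrable (f i) μ) (hf_sum : ∀ᵐ a ∂μ, Summable fun i => f i a) :
    ∫ a, ∑' i, f i a ∂μ = ∑' i, ∫ a, f i a ∂μ := by
  have hf_ofReal : ∀ i, AEMeasurable (fun a => ENNReal.ofReal (f i a)) μ :=
    fun i => (hf_int i).aemeasurable.ennreal_ofReal
  have htsum_nonneg : 0 ≤ᵐ[μ] fun a => ∑' i, f i a := by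
    filter_upwards [ae_all_iff.2 hf_nonneg] with a ha using tsum_nonneg ha
  have hofReal_tsum : ∀ᵐ a ∂μ,
      ENNReal.ofReal (∑' i, f i a) = ∑' i, ENNReal.ofReal (f i a) := by
    filter_upwards [ae_all_iff.2 hf_nonneg, hf_sum] with a ha hs
    exact ENNReal.ofReal_tsum_of_nonneg ha hs
  rw [integral_eq_lintegral_of_nonneg_ae htsum_nonneg
      (AEMeasurable.tsum fun i => (hf_int i).aemeasurable).aestronglyMeasurable,
    lintegral_congr_ae hofReal_tsum, lintegral_tsum hf_ofReal,
    ENNReal.tsum_toReal_eq fun i => (hf_int i).lintegral_lt_top.ne]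
  exact tsum_congr fun i => (integral_eq_lintegral_of_nonneg_ae (hf_nonneg i) (hf_int i).1).symm

section SquareSubstitution

variable {a b c : ℝ}

theorem image_sq_div_Ioc (hc : 0 < c) (ha : 0 ≤ a) (hab : a ≤ b) :
    (fun y : ℝ => y ^ 2 / c) '' Ioc a b = Ioc (a ^ 2 / c) (b ^ 2 / c) := by
  refine Subset.antisymm ?_
    (intermediate_value_Ioc hab (f := fun y : ℝ => y ^ 2 / c) (by fun_prop))
  rintro _ ⟨y, ⟨hay, hyb⟩, rfl⟩
  exact ⟨by dsimp only; gcongr, by dsimp only; gcongr; linarith⟩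

theorem hasDerivWithinAt_sq_div (c y : ℝ) (s : Set ℝ) :
    HasDerivWithinAt (fun y : ℝ => y ^ 2 / c) (2 * y / c) s y := by
  simpa using ((hasDerivAt_pow 2 y).div_const c).hasDerivWithinAt

theorem injOn_sq_div_Ioc (hc : 0 < c) (ha : 0 ≤ a) :
    InjOn (fun y : ℝ => y ^ 2 / c) (Ioc a b) := fun _ hu _ hv huv =>
  (pow_left_inj₀ (ha.trans hu.1.le) (ha.trans hv.1.le) two_ne_zero).1
    ((div_left_inj' hc.ne').1 huv)

theorem integrableOn_Ioc_sq_div_iff (hc : 0 < c) (ha : 0 ≤ a) (hab : a ≤ b) (g : ℝ → ℝ) :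
    IntegrableOn g (Ioc (a ^ 2 / c) (b ^ 2 / c)) ↔
      IntegrableOn (fun y => 2 * y / c * g (y ^ 2 / c)) (Ioc a b) := by
  rw [← image_sq_div_Ioc hc ha hab, integrableOn_image_iff_integrableOn_abs_deriv_smul
    measurableSet_Ioc (fun y _ => hasDerivWithinAt_sq_div c y _) (injOn_sq_div_Ioc hc ha)]
  refine integrableOn_congr_fun (fun y hy => ?_) measurableSet_Ioc
  rw [smul_eq_mul, abs_of_nonneg (by have := ha.trans hy.1.le; positivity)]

theorem setIntegral_Ioc_sq_div (hc : 0 < c) (ha : 0 ≤ a) (hab : a ≤ b) (g : ℝ → ℝ) :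
    ∫ t in Ioc (a ^ 2 / c) (b ^ 2 / c), g t = ∫ y in Ioc a b, 2 * y / c * g (y ^ 2 / c) := by
  rw [← image_sq_div_Ioc hc ha hab, integral_image_eq_integral_abs_deriv_smul
    measurableSet_Ioc (fun y _ => hasDerivWithinAt_sq_div c y _) (injOn_sq_div_Ioc hc ha)]
  refine setIntegral_congr_fun measurableSet_Ioc (fun y hy => ?_)
  rw [smul_eq_mul, abs_of_nonneg (by have := ha.trans hy.1.le; positivity)]

end SquareSubstitution

noncomputable def genGammaIntegrand (a b t : ℝ) : ℝ :=
  t ^ (a - 1) * exp (-t - b / t)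

theorem genGammaIntegrand_neg_natCast (k : ℕ) (b : ℝ) {t : ℝ} (ht : 0 ≤ t) :
    genGammaIntegrand (-k) b t = exp (-t - b / t) / t ^ (k + 1) := by
  rw [genGammaIntegrand, show -(k : ℝ) - 1 = -((k + 1 : ℕ) : ℝ) by push_cast; ring,
    rpow_neg ht, rpow_natCast, inv_mul_eq_div]

theorem genGammaIntegrand_neg_natCast_le (k : ℕ) {b t : ℝ} (hb : 0 < b) (ht : 0 < t) :
    genGammaIntegrand (-k) b t ≤ (k + 1).factorial / b ^ (k + 1) * exp (-t) := by
  have hexp : (b / t) ^ (k + 1) / (k + 1).factorial ≤ exp (b / t) :=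
    pow_div_factorial_le_exp _ (by positivity) _
  calc genGammaIntegrand (-k) b t = exp (-t) / (t ^ (k + 1) * exp (b / t)) := by
        rw [genGammaIntegrand_neg_natCast k b ht.le, exp_sub, div_div, mul_comm]
    _ ≤ exp (-t) / (t ^ (k + 1) * ((b / t) ^ (k + 1) / (k + 1).factorial)) := by
        gcongr
    _ = (k + 1).factorial / b ^ (k + 1) * exp (-t) := by
        rw [div_pow]
        field_simp

theorem integrableOn_genGammaIntegrand_neg_natCast (k : ℕ) {b y : ℝ} (hb : 0 < b)
    (hy : 0 ≤ y) : IntegrableOn (genGammaIntegrand (-k) b) (Ioi y) := by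
  refine Integrable.mono' ((exp_neg_integrableOn_Ioi y one_pos).const_mul
    ((k + 1).factorial / b ^ (k + 1))) ?_ ?_
  · exact (by unfold genGammaIntegrand; fun_prop : Measurable _).aestronglyMeasurable
  · filter_upwards [ae_restrict_mem measurableSet_Ioi] with t ht
    have ht : 0 < t := hy.trans_lt ht
    rw [norm_of_nonneg (by rw [genGammaIntegrand_neg_natCast k b ht.le]; positivity), neg_one_mul]
    exact genGammaIntegrand_neg_natCast_le k hb ht

theorem genGamma_sub_genGamma {a b y₁ y₂ : ℝ} (h : IntegrableOn (genGammaIntegrand a b) (Ioi y₁))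
    (hy : y₁ ≤ y₂) :
    genGamma a y₁ b - genGamma a y₂ b = ∫ t in Ioc y₁ y₂, genGammaIntegrand a b t := by
  rw [← intervalIntegral.integral_of_le hy]
  exact intervalIntegral.integral_Ioi_sub_Ioi h hy

noncomputable def besselI0Term (h : ℝ) (k : ℕ) : ℝ :=
  (h ^ 2 / 4) ^ k / ((k.factorial : ℝ) * (k.factorial : ℝ))

theorem besselI0Term_nonneg (h : ℝ) (k : ℕ) : 0 ≤ besselI0Term h k := by
  unfold besselI0Term; positivity

theorem summable_besselI0Term (h : ℝ) : Summable (besselI0Term h) := by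
  refine (summable_pow_div_factorial (h ^ 2 / 4)).of_nonneg_of_le (besselI0Term_nonneg h)
    fun k => div_le_div_of_nonneg_left (by positivity) (by positivity) ?_
  exact le_mul_of_one_le_right (by positivity) (by exact_mod_cast k.factorial_pos)

section ProductDensity

variable (σ₁ σ₂ μ x : ℝ)

-- The `k`-th term of `α · p₁(y) p₂(x/y) / y` once `I₀` is expanded into its series.
noncomputable def productDensityTerm (k : ℕ) (y : ℝ) : ℝ :=
  (y / σ₁ ^ 2) * exp (-y ^ 2 / (2 * σ₁ ^ 2)) *
    (((x / y) / σ₂ ^ 2) * exp (-((x / y) ^ 2 + μ ^ 2) / (2 * σ₂ ^ 2)) *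
      besselI0Term ((x / y) * μ / σ₂ ^ 2) k) * (1 / y)

noncomputable def productDensityCoeff (k : ℕ) : ℝ :=
  x * exp (-μ ^ 2 / (2 * σ₂ ^ 2)) / (2 * (σ₁ * σ₂) ^ 2) *
    ((x * μ / 2) ^ (2 * k) /
      ((k.factorial : ℝ) * (k.factorial : ℝ) * (2 * σ₂ ^ 2 * (σ₁ * σ₂) ^ 2) ^ k))

variable {σ₁ σ₂ μ x}

theorem productDensityTerm_nonneg (hx : 0 ≤ x) (k : ℕ) {y : ℝ} (hy : 0 < y) :
    0 ≤ productDensityTerm σ₁ σ₂ μ x k y := by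
  have := besselI0Term_nonneg ((x / y) * μ / σ₂ ^ 2) k
  unfold productDensityTerm
  positivity

theorem productDensityTerm_eq (hσ₁ : 0 < σ₁) (hσ₂ : 0 < σ₂) (k : ℕ) {y : ℝ} (hy : 0 < y) :
    productDensityTerm σ₁ σ₂ μ x k y = productDensityCoeff σ₁ σ₂ μ x k *
      (2 * y / (2 * σ₁ ^ 2) * genGammaIntegrand (-k) (x ^ 2 / (4 * (σ₁ * σ₂) ^ 2))
        (y ^ 2 / (2 * σ₁ ^ 2))) := by
  have hy₂ : 0 < y ^ 2 / (2 * σ₁ ^ 2) := by positivity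
  have hexp : exp (-y ^ 2 / (2 * σ₁ ^ 2)) * exp (-((x / y) ^ 2 + μ ^ 2) / (2 * σ₂ ^ 2)) =
      exp (-μ ^ 2 / (2 * σ₂ ^ 2)) * exp (-(y ^ 2 / (2 * σ₁ ^ 2)) -
        x ^ 2 / (4 * (σ₁ * σ₂) ^ 2) / (y ^ 2 / (2 * σ₁ ^ 2))) := by
    rw [← exp_add, ← exp_add]
    congr 1
    field_simp
    ring
  have hE₁ := exp_pos (-y ^ 2 / (2 * σ₁ ^ 2))
  rw [genGammaIntegrand_neg_natCast k _ hy₂.le]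
  unfold productDensityTerm productDensityCoeff besselI0Term
  generalize exp (-y ^ 2 / (2 * σ₁ ^ 2)) = E₁ at hexp hE₁ ⊢
  generalize exp (-((x / y) ^ 2 + μ ^ 2) / (2 * σ₂ ^ 2)) = E₂ at hexp ⊢
  obtain rfl : E₂ = _ := eq_div_of_mul_eq hE₁.ne' ((mul_comm _ _).trans hexp)
  simp only [show (4 : ℝ) = 2 ^ 2 by norm_num, div_pow, mul_pow, ← pow_mul]
  field_simp
  ring

variable {m₁ m₂ : ℝ}

theorem integrableOn_productDensityTerm (hσ₁ : 0 < σ₁) (hσ₂ : 0 < σ₂) (hx : 0 < x)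
    (hm₁ : 0 ≤ m₁) (hm : m₁ ≤ m₂) (k : ℕ) :
    IntegrableOn (productDensityTerm σ₁ σ₂ μ x k) (Ioc m₁ m₂) := by
  have hψ : IntegrableOn (genGammaIntegrand (-k) (x ^ 2 / (4 * (σ₁ * σ₂) ^ 2)))
      (Ioc (m₁ ^ 2 / (2 * σ₁ ^ 2)) (m₂ ^ 2 / (2 * σ₁ ^ 2))) :=
    (integrableOn_genGammaIntegrand_neg_natCast k (by positivity) (by positivity)).mono_set
      Ioc_subset_Ioi_self
  rw [integrableOn_Ioc_sq_div_iff (by positivity) hm₁ hm] at hψ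
  refine (integrableOn_congr_fun (fun y hy => ?_) measurableSet_Ioc).2
    (hψ.const_mul (productDensityCoeff σ₁ σ₂ μ x k))
  exact productDensityTerm_eq hσ₁ hσ₂ k (hm₁.trans_lt hy.1)

theorem setIntegral_productDensityTerm (hσ₁ : 0 < σ₁) (hσ₂ : 0 < σ₂) (hx : 0 < x)
    (hm₁ : 0 ≤ m₁) (hm : m₁ ≤ m₂) (k : ℕ) :
    ∫ y in Ioc m₁ m₂, productDensityTerm σ₁ σ₂ μ x k y =
      productDensityCoeff σ₁ σ₂ μ x k *
        (genGamma (-k) (m₁ ^ 2 / (2 * σ₁ ^ 2)) (x ^ 2 / (4 * (σ₁ * σ₂) ^ 2)) -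
          genGamma (-k) (m₂ ^ 2 / (2 * σ₁ ^ 2)) (x ^ 2 / (4 * (σ₁ * σ₂) ^ 2))) := by
  rw [genGamma_sub_genGamma (integrableOn_genGammaIntegrand_neg_natCast k (by positivity)
      (by positivity)) (by gcongr), setIntegral_Ioc_sq_div (by positivity) hm₁ hm,
    ← integral_const_mul]
  exact setIntegral_congr_fun measurableSet_Ioc
    fun y hy => productDensityTerm_eq hσ₁ hσ₂ k (hm₁.trans_lt hy.1)

end ProductDensity

theorem product_truncRayleigh_rician_density_general (σ₁ σ₂ μ m₁ m₂ : ℝ)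
    (hσ₁ : 0 < σ₁) (hσ₂ : 0 < σ₂) (hm₁ : 0 ≤ m₁) (hm : m₁ < m₂) :
    ∀ x : ℝ, 0 ≤ x →
      ∫ x₁ in Set.Icc m₁ m₂,
          ((x₁ / σ₁ ^ 2) * Real.exp (-x₁ ^ 2 / (2 * σ₁ ^ 2)) /
              (Real.exp (-(m₁ ^ 2 / (2 * σ₁ ^ 2))) -
                Real.exp (-(m₂ ^ 2 / (2 * σ₁ ^ 2))))) *
            (((x / x₁) / σ₂ ^ 2) * Real.exp (-((x / x₁) ^ 2 + μ ^ 2) / (2 * σ₂ ^ 2)) *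
              besselI0 ((x / x₁) * μ / σ₂ ^ 2)) *
            (1 / x₁) =
        (x * Real.exp (-μ ^ 2 / (2 * σ₂ ^ 2)) / (2 * (σ₁ * σ₂) ^ 2)) *
          ∑' i : ℕ,
            (genGamma (-(i : ℝ)) (m₁ ^ 2 / (2 * σ₁ ^ 2)) (x ^ 2 / (4 * (σ₁ * σ₂) ^ 2)) -
                genGamma (-(i : ℝ)) (m₂ ^ 2 / (2 * σ₁ ^ 2)) (x ^ 2 / (4 * (σ₁ * σ₂) ^ 2))) /
              ((Real.exp (-(m₁ ^ 2 / (2 * σ₁ ^ 2))) -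
                  Real.exp (-(m₂ ^ 2 / (2 * σ₁ ^ 2)))) *
                (i.factorial : ℝ) * (i.factorial : ℝ) *
                (2 * σ₂ ^ 2 * (σ₁ * σ₂) ^ 2) ^ i) *
              (x * μ / 2) ^ (2 * i) := by
  intro x hx
  obtain rfl | hx := hx.eq_or_lt
  · simp
  set α := exp (-(m₁ ^ 2 / (2 * σ₁ ^ 2))) - exp (-(m₂ ^ 2 / (2 * σ₁ ^ 2)))
  have hseries : ∀ y : ℝ,
      (y / σ₁ ^ 2) * exp (-y ^ 2 / (2 * σ₁ ^ 2)) / α *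
          (((x / y) / σ₂ ^ 2) * exp (-((x / y) ^ 2 + μ ^ 2) / (2 * σ₂ ^ 2)) *
            besselI0 ((x / y) * μ / σ₂ ^ 2)) * (1 / y) =
        α⁻¹ * ∑' k, productDensityTerm σ₁ σ₂ μ x k y := by
    intro y
    simp only [productDensityTerm, besselI0, besselI0Term, tsum_mul_left, tsum_mul_right]
    ring
  simp only [hseries]
  rw [integral_Icc_eq_integral_Ioc, integral_const_mul, integral_tsum_of_nonneg
      (fun k => (ae_restrict_mem measurableSet_Ioc).mono
        fun y hy => productDensityTerm_nonneg hx.le k (hm₁.trans_lt hy.1))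
      (integrableOn_productDensityTerm hσ₁ hσ₂ hx hm₁ hm.le)
      (.of_forall fun y => (summable_besselI0Term _).mul_left _ |>.mul_left _ |>.mul_right _),
    ← tsum_mul_left, ← tsum_mul_left]
  refine tsum_congr fun k => ?_
  rw [setIntegral_productDensityTerm hσ₁ hσ₂ hx hm₁ hm.le, productDensityCoeff]
  simp only [div_eq_mul_inv, mul_inv]
  ring

/-- Product of a double-truncated Rayleigh r.v. (on `[m₁, m₂]`) and an independent Rician
r.v.: the Mellin-convolution density of `X = X₁X₂` equals
`(x e^{−μ²/(2σ₂²)}/(2σ²)) ∑_i [Γ(−i, β₁; x²/(4σ²)) − Γ(−i, β₂; x²/(4σ²))]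
  /(α·i!·i!·(2σ₂²σ²)^i)·(xμ/2)^{2i}` with `σ = σ₁σ₂`. -/
theorem product_truncRayleigh_rician_density (σ₁ σ₂ μ m₁ m₂ : ℝ)
    (hσ₁ : 0 < σ₁) (hσ₂ : 0 < σ₂) (hμ : 0 ≤ μ) (hm₁ : 0 ≤ m₁) (hm : m₁ < m₂) :
    ∀ x : ℝ, 0 ≤ x →
      ∫ x₁ in Set.Icc m₁ m₂,
          ((x₁ / σ₁ ^ 2) * Real.exp (-x₁ ^ 2 / (2 * σ₁ ^ 2)) /
              (Real.exp (-(m₁ ^ 2 / (2 * σ₁ ^ 2))) -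
                Real.exp (-(m₂ ^ 2 / (2 * σ₁ ^ 2))))) *
            (((x / x₁) / σ₂ ^ 2) * Real.exp (-((x / x₁) ^ 2 + μ ^ 2) / (2 * σ₂ ^ 2)) *
              besselI0 ((x / x₁) * μ / σ₂ ^ 2)) *
            (1 / x₁) =
        (x * Real.exp (-μ ^ 2 / (2 * σ₂ ^ 2)) / (2 * (σ₁ * σ₂) ^ 2)) *
          ∑' i : ℕ,
            (genGamma (-(i : ℝ)) (m₁ ^ 2 / (2 * σ₁ ^ 2)) (x ^ 2 / (4 * (σ₁ * σ₂) ^ 2)) -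
                genGamma (-(i : ℝ)) (m₂ ^ 2 / (2 * σ₁ ^ 2)) (x ^ 2 / (4 * (σ₁ * σ₂) ^ 2))) /
              ((Real.exp (-(m₁ ^ 2 / (2 * σ₁ ^ 2))) -
                  Real.exp (-(m₂ ^ 2 / (2 * σ₁ ^ 2)))) *
                (i.factorial : ℝ) * (i.factorial : ℝ) *
                (2 * σ₂ ^ 2 * (σ₁ * σ₂) ^ 2) ^ i) *
              (x * μ / 2) ^ (2 * i) :=
  product_truncRayleigh_rician_density_general σ₁ σ₂ μ m₁ m₂ hσ₁ hσ₂ hm₁ hm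
end
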